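/- arXiv:1803.09009 — 2 statements merged into one kernel-verified Lean document; each statement's English description precedes it below -/
import Mathlib

section
/- Let α and α' be consecutive extended co-necklaces (of length 2n) in the reverse colexicographic listing of extended co-necklaces, with α before α'. Then the length-n prefix of α comes before the length-n prefix of α' in colexicographic order. -/
/-- A binary necklace: lexicographically least among all its cyclic rotations
(`false < true`). -/
def IsNecklace (w : List Bool) : Prop := ∀ r : ℕ, w ≤ w.rotate r

/-- β is a co-necklace if β followed by its bitwise complement is a necklace. -/
def IsCoNecklace (β : List Bool) : Prop := IsNecklace (β ++ β.map (fun b => !b))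

/-- The extended co-necklace associated to a co-necklace β. -/
def extCoNeck (β : List Bool) : List Bool := β ++ β.map (fun b => !b)

/-- Colexicographic strict order on equal-length strings. -/
def ColexLt (a b : List Bool) : Prop := a.reverse < b.reverse

/-! The colex order on `ββ̄` is decided first by the reversed complements `β̄`, and
complementation reverses the order between strings of equal length; equal complements would
force `β = β'`, which strictness excludes. -/

namespace List

variable {α β : Type*}

theorem Lex.left_or_eq_of_append {r : α → α → Prop} :
    ∀ {a c b d : List α}, a.length = c.length → Lex r (a ++ b) (c ++ d) →
      Lex r a c ∨ a = c ∧ Lex r b d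
  | [], [], _, _, _, h => .inr ⟨rfl, h⟩
  | _ :: _, _ :: _, _, _, _, .rel h => .inl (.rel h)
  | _ :: _, _ :: _, _, _, hl, .cons h =>
    (left_or_eq_of_append (Nat.succ.inj hl) h).imp Lex.cons fun ⟨hac, hbd⟩ => ⟨hac ▸ rfl, hbd⟩

theorem map_lt_map_of_anti [LT α] [LT β] {f : α → β} (hf : ∀ x y, x < y → f y < f x) :
    ∀ {l₁ l₂ : List α}, l₁.length = l₂.length → l₁ < l₂ → l₂.map f < l₁.map f
  | [], _ :: _, hl, _ => nomatch hl
  | _ :: _, _ :: _, _, .rel h => .rel (hf _ _ h)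
  | _ :: _, _ :: _, hl, .cons h => .cons (map_lt_map_of_anti hf (Nat.succ.inj hl) h)

end List

theorem colexLt_of_colexLt_extCoNeck {β β' : List Bool} (hlen : β.length = β'.length)
    (h : ColexLt (extCoNeck β') (extCoNeck β)) : ColexLt β β' := by
  have hcompl : (β'.map (!·)).reverse.length = (β.map (!·)).reverse.length := by simp [hlen]
  rw [ColexLt, extCoNeck, extCoNeck, List.reverse_append, List.reverse_append] at h
  rcases List.Lex.left_or_eq_of_append hcompl h with hlt | ⟨heq, hlt⟩
  · simpa [ColexLt, ← List.map_reverse, Function.comp_def] using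
      List.map_lt_map_of_anti (f := (!·)) (by decide) hcompl hlt
  · obtain rfl : β' = β :=
      List.map_injective_iff.2 Bool.not_injective (List.reverse_injective heq)
    exact absurd hlt (List.lt_irrefl _)

theorem stmt_5_general (n : ℕ) (β β' : List Bool)
    (hβlen : β.length = n) (hβ'len : β'.length = n)
    -- α = extCoNeck β comes before α' = extCoNeck β' in reverse colex order
    (hlt : ColexLt (extCoNeck β') (extCoNeck β)) :
    ColexLt ((extCoNeck β).take n) ((extCoNeck β').take n) := by
  rw [extCoNeck, extCoNeck, List.take_left' hβlen, List.take_left' hβ'len]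
  exact colexLt_of_colexLt_extCoNeck (hβlen.trans hβ'len.symm) hlt

theorem stmt_5 (n : ℕ) (β β' : List Bool)
    (hβlen : β.length = n) (hβ'len : β'.length = n)
    (hβ : IsCoNecklace β) (hβ' : IsCoNecklace β')
    -- α = extCoNeck β comes before α' = extCoNeck β' in reverse colex order
    (hlt : ColexLt (extCoNeck β') (extCoNeck β))
    (hadj : ∀ γ : List Bool, γ.length = n → IsCoNecklace γ →
      ¬ (ColexLt (extCoNeck γ) (extCoNeck β) ∧ ColexLt (extCoNeck β') (extCoNeck γ))) :
    ColexLt ((extCoNeck β).take n) ((extCoNeck β').take n) :=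
  stmt_5_general n β β' hβlen hβ'len hlt
end

section
/- If β is a binary co-necklace of length n and 1 ≤ s ≤ n with b_s ≠ 0 (writing β = b_1...b_n), then the string 0^{s−1} b_s b_{s+1} ... b_n is also a co-necklace of length n. -/
/-!
Let `t = s - 1`, `γ = 0^t b_s ⋯ b_n`, `u = γγ̄` and `w = ββ̄`. If `β` begins with `0^t` then
`γ = β`; otherwise `β` begins with `0^j 1` for some `j < t`, while `u` begins with `0^t 1`.
The rotations of `u` by `0 < r ≤ t` and by `n < r < n + t` begin with fewer than `t` zeros and a
`1`, hence exceed `u`. For `t < r ≤ n`, `u < w ≤ rot_r w < rot_r u`, the last step because `β̄`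
begins with `1^j 0` and `γ̄` with `1^t`. For `n + t ≤ r < 2n`, the two rotations are `p γ ⋯` and
`p β ⋯` for the same nonempty suffix `p` of `β̄`; as `p β ⋯ ≥ w`, the word `p` begins with at
most `j` zeros and a `1`, and then so does `rot_r u`.
-/

namespace List

theorem replicate_false_append_lt {a b : ℕ} (hba : b < a) (l l' : List Bool) :
    replicate a false ++ l < replicate b false ++ true :: l' := by
  induction b generalizing a with
  | zero =>
    obtain ⟨a, rfl⟩ := Nat.exists_eq_add_of_lt hba
    exact Lex.rel (by decide)
  | succ b ih =>
    obtain ⟨a, rfl⟩ := Nat.exists_eq_succ_of_ne_zero (by omega : a ≠ 0)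
    exact Lex.cons (ih (by omega))

theorem replicate_true_append_false_lt {a b : ℕ} (hab : a < b) (l l' : List Bool) :
    replicate a true ++ false :: l < replicate b true ++ l' := by
  induction a generalizing b with
  | zero =>
    obtain ⟨b, rfl⟩ := Nat.exists_eq_add_of_lt hab
    exact Lex.rel (by decide)
  | succ a ih =>
    obtain ⟨b, rfl⟩ := Nat.exists_eq_succ_of_ne_zero (by omega : b ≠ 0)
    exact Lex.cons (ih (by omega))

theorem eq_replicate_false_or_exists_eq_replicate_false_append_true (l : List Bool) :
    l = replicate l.length false ∨ ∃ i x, l = replicate i false ++ true :: x := by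
  induction l with
  | nil => simp
  | cons b l ih =>
    cases b
    · rcases ih with h | ⟨i, x, h⟩
      · exact .inl (by rw [length_cons, replicate_succ, ← h])
      · exact .inr ⟨i + 1, x, by rw [h]; rfl⟩
    · exact .inr ⟨0, l, rfl⟩

theorem rotate_append_of_le_length {α : Type*} {a : List α} (b : List α) {r : ℕ}
    (hr : r ≤ a.length) : (a ++ b).rotate r = a.drop r ++ b ++ a.take r := by
  have h := rotate_append_length_eq (a.take r) (a.drop r ++ b)
  rw [length_take_of_le hr, ← append_assoc, take_append_drop] at h
  rw [h, append_assoc]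

theorem rotate_append_length_add {α : Type*} (a : List α) {b : List α} {k : ℕ}
    (hk : k ≤ b.length) : (a ++ b).rotate (a.length + k) = b.drop k ++ a ++ b.take k := by
  rw [← rotate_rotate, rotate_append_length_eq, rotate_append_of_le_length _ hk]

theorem length_replicate_append_drop {α : Type*} (a : α) {l : List α} {t : ℕ}
    (ht : t ≤ l.length) : (replicate t a ++ l.drop t).length = l.length := by
  rw [length_append, length_replicate, length_drop]
  omega

theorem drop_replicate_append_drop {α : Type*} (a : α) (l : List α) {t k : ℕ} (hk : t ≤ k) :
    (replicate t a ++ l.drop t).drop k = l.drop k := by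
  rw [drop_append, drop_replicate, length_replicate, drop_drop, Nat.sub_eq_zero_of_le hk,
    Nat.add_sub_cancel' hk]
  rfl

theorem lt_length_of_drop_eq_cons {α : Type*} {l q : List α} {a : α} {t : ℕ}
    (h : l.drop t = a :: q) : t < l.length := by
  have := congrArg length h
  rw [length_drop, length_cons] at this
  omega

end List

open List

theorem isNecklace_of_forall_lt_length {w : List Bool}
    (h : ∀ r, 0 < r → r < w.length → w ≤ w.rotate r) : IsNecklace w := by
  intro r
  rcases eq_or_ne w [] with rfl | hw
  · simp
  rw [← rotate_mod]
  rcases Nat.eq_zero_or_pos (r % w.length) with hr | hr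
  · rw [hr, rotate_zero]
  · exact h _ hr (Nat.mod_lt _ (length_pos_iff.2 hw))

theorem exists_eq_replicate_false_append_true_of_le {j : ℕ} {p x y : List Bool} (hp : p ≠ [])
    (h : replicate j false ++ true :: x ≤ p ++ (replicate j false ++ true :: y)) :
    ∃ i ≤ j, ∃ p', p = replicate i false ++ true :: p' := by
  rcases eq_replicate_false_or_exists_eq_replicate_false_append_true p with hp0 | ⟨i, p', rfl⟩
  · refine absurd h (not_le.2 ?_)
    rw [hp0, ← append_assoc, ← replicate_add]
    exact replicate_false_append_lt (by have := length_pos_iff.2 hp; omega) _ _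
  · refine ⟨i, ?_, p', rfl⟩
    by_contra! hji
    refine absurd h (not_le.2 ?_)
    rw [append_assoc, cons_append]
    exact replicate_false_append_lt hji _ _

theorem IsCoNecklace.le_rotate_replicate_false_append_drop_of_le_length {β γ x q : List Bool}
    {j t r : ℕ} (hβ : IsCoNecklace β) (hx : β = replicate j false ++ true :: x)
    (hq : β.drop t = true :: q) (hjt : j < t) (hγ : γ = replicate t false ++ β.drop t)
    (hr0 : 0 < r) (hr : r ≤ β.length) :
    γ ++ γ.map not ≤ (γ ++ γ.map not).rotate r := by
  have htn := lt_length_of_drop_eq_cons hq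
  have hγlen : γ.length = β.length := by rw [hγ, length_replicate_append_drop _ htn.le]
  rw [rotate_append_of_le_length _ (hγlen ▸ hr)]
  apply le_of_lt
  rcases le_or_gt r t with hrt | htr
  · rw [hγ, hq, drop_append_of_le_length (by simp [hrt]), drop_replicate]
    simpa only [append_assoc, cons_append] using
      replicate_false_append_lt (by omega : t - r < t) _ _
  · calc γ ++ γ.map not < β ++ β.map not := by
          rw [hγ, hq, hx]
          simpa only [append_assoc, cons_append] using replicate_false_append_lt hjt _ _
      _ ≤ (β ++ β.map not).rotate r := hβ r
      _ = β.drop r ++ β.map not ++ β.take r := rotate_append_of_le_length _ hr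
      _ < γ.drop r ++ γ.map not ++ γ.take r := by
          rw [hγ, drop_replicate_append_drop _ _ htr.le, append_assoc, append_assoc]
          apply append_left_lt
          rw [hq, hx]
          simpa only [map_append, map_replicate, map_cons, Bool.not_false,
            Bool.not_true, append_assoc, cons_append] using
            replicate_true_append_false_lt hjt _ _

theorem IsCoNecklace.le_rotate_length_add_replicate_false_append_drop {β γ x q : List Bool}
    {j t k : ℕ} (hβ : IsCoNecklace β) (hx : β = replicate j false ++ true :: x)
    (hq : β.drop t = true :: q) (hjt : j < t) (hγ : γ = replicate t false ++ β.drop t)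
    (hk : k < β.length) :
    γ ++ γ.map not ≤ (γ ++ γ.map not).rotate (β.length + k) := by
  have htn := lt_length_of_drop_eq_cons hq
  have hγlen : γ.length = β.length := by rw [hγ, length_replicate_append_drop _ htn.le]
  have hγ' : γ ++ γ.map not = replicate t false ++ true :: (q ++ γ.map not) := by
    rw [hγ, hq, append_assoc, cons_append]
  rw [← hγlen, rotate_append_length_add _ (by rw [length_map]; omega), hγ']
  apply le_of_lt
  rcases lt_or_ge k t with hkt | htk
  · obtain ⟨m, hm⟩ : ∃ m, t - k = m + 1 := ⟨t - k - 1, by omega⟩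
    rw [hγ, hq, map_append, map_replicate, drop_append_of_le_length (by simp [hkt.le]),
      drop_replicate, hm, replicate_succ]
    exact replicate_false_append_lt (by omega : 0 < t) _ _
  · have hdrop : (γ.map not).drop k = (β.map not).drop k := by
      rw [← map_drop, hγ, drop_replicate_append_drop _ _ htk, map_drop]
    have hne : (β.map not).drop k ≠ [] := by
      rw [← length_pos_iff, length_drop, length_map]
      omega
    have hβ_append : ∀ l, β ++ l = replicate j false ++ true :: (x ++ l) := fun l => by
      rw [hx, append_assoc, cons_append]
    have hrot := hβ (β.length + k)
    rw [rotate_append_length_add _ (by rw [length_map]; omega), append_assoc, hβ_append,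
      hβ_append] at hrot
    obtain ⟨i, hij, p, hp⟩ := exists_eq_replicate_false_append_true_of_le hne hrot
    rw [hdrop, hp]
    simpa only [append_assoc, cons_append] using replicate_false_append_lt (by omega : i < t) _ _

theorem IsCoNecklace.replicate_false_append_drop_of_lt {β x q : List Bool} {j t : ℕ}
    (hβ : IsCoNecklace β) (hx : β = replicate j false ++ true :: x)
    (hq : β.drop t = true :: q) (hjt : j < t) :
    IsCoNecklace (replicate t false ++ β.drop t) := by
  have hlen : (replicate t false ++ β.drop t).length = β.length :=
    length_replicate_append_drop _ (lt_length_of_drop_eq_cons hq).le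
  apply isNecklace_of_forall_lt_length
  intro r hr0 hr
  rw [length_append, length_map, hlen] at hr
  rcases le_or_gt r β.length with hrn | hnr
  · exact hβ.le_rotate_replicate_false_append_drop_of_le_length hx hq hjt rfl hr0 hrn
  · obtain ⟨k, rfl⟩ : ∃ k, r = β.length + k := ⟨r - β.length, by omega⟩
    exact hβ.le_rotate_length_add_replicate_false_append_drop hx hq hjt rfl (by omega)

theorem IsCoNecklace.replicate_false_append_drop {β : List Bool} {t : ℕ} (hβ : IsCoNecklace β)
    (ht : β[t]? = some true) : IsCoNecklace (replicate t false ++ β.drop t) := by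
  obtain ⟨htn, hbt⟩ := List.getElem?_eq_some_iff.1 ht
  have hq : β.drop t = true :: β.drop (t + 1) := by rw [drop_eq_getElem_cons htn, hbt]
  rcases eq_replicate_false_or_exists_eq_replicate_false_append_true β with hβ0 | ⟨j, x, hx⟩
  · rw [hβ0, getElem?_replicate] at ht
    simp at ht
  rcases lt_or_ge j t with hjt | htj
  · exact hβ.replicate_false_append_drop_of_lt hx hq hjt
  · have htake : β.take t = replicate t false := by
      rw [hx, take_append_of_le_length (by simpa using htj), take_replicate, min_eq_left htj]
    rwa [← htake, take_append_drop]

theorem stmt_7 (n s : ℕ) (β : List Bool)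
    (hβlen : β.length = n) (hβ : IsCoNecklace β)
    (hs1 : 1 ≤ s) (hsn : s ≤ n)
    (hbs : β[s - 1]? ≠ some false) :
    IsCoNecklace (List.replicate (s - 1) false ++ β.drop (s - 1)) := by
  have hbit : β[s - 1]? = some true := by
    rw [getElem?_eq_getElem (by omega)] at hbs ⊢
    simpa using hbs
  exact hβ.replicate_false_append_drop hbit
end
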